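/- For every p ∈ F^{r(Σ+d)}, the Euler-type identity T_p p = d · f(p) holds. Moreover, if p is norm-balanced (within each block b_i = (a_i^{(1)}, …, a_i^{(d)}) all factor norms ‖a_i^{(1)}‖ = ⋯ = ‖a_i^{(d)}‖ are equal), then p is orthogonal to every kernel basis vector: ⟨k_i^{(k)} ⊗ e_i, p⟩ = 0 for all 2 ≤ k ≤ d and 1 ≤ i ≤ r, i.e., K^H p = 0. -/

import Mathlib

open scoped BigOperators
open scoped Matrix

noncomputable section

namespace TensorCond

variable {𝕜 : Type*} [RCLike 𝕜]
variable {d r : ℕ} {n : Fin d → ℕ}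

/-- The space `F^{r(Σ+d)}` of vectorized factor matrices: `r` blocks,
each consisting of `d` factors `a_i^{(k)} ∈ F^{n_k}`. -/
abbrev Vecr (𝕜 : Type*) (d r : ℕ) (n : Fin d → ℕ) : Type _ :=
  Fin r → (k : Fin d) → Fin (n k) → 𝕜

/-- The tensor space `F^{n₁} ⊗ ⋯ ⊗ F^{n_d} ≅ F^Π`. -/
abbrev Tensor (𝕜 : Type*) (d : ℕ) (n : Fin d → ℕ) : Type _ :=
  ((k : Fin d) → Fin (n k)) → 𝕜

/-- Column index of Terracini's matrix. -/
abbrev ColIdx (d r : ℕ) (n : Fin d → ℕ) : Type _ :=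
  Fin r × Σ k : Fin d, Fin (n k)

/-- The tensor computation map `f`. -/
def tmap (p : Vecr 𝕜 d r n) : Tensor 𝕜 d n :=
  fun x => ∑ i, ∏ k, p i k (x k)

/-- Terracini's matrix `T_p`. -/
def terracini (p : Vecr 𝕜 d r n) :
    Matrix ((k : Fin d) → Fin (n k)) (ColIdx d r n) 𝕜 :=
  Matrix.of fun x q =>
    (if x q.2.1 = q.2.2 then (1 : 𝕜) else 0) *
      ∏ l ∈ Finset.univ.erase q.2.1, p q.1 l (x l)

/-- Flattening of a representative vector. -/
def flat (p : Vecr 𝕜 d r n) : ColIdx d r n → 𝕜 :=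
  fun q => p q.1 q.2.1 q.2.2

/-- Flattening as a linear map. -/
def flatLM (𝕜 : Type*) [RCLike 𝕜] (d r : ℕ) (n : Fin d → ℕ) :
    Vecr 𝕜 d r n →ₗ[𝕜] (ColIdx d r n → 𝕜) where
  toFun := flat
  map_add' _ _ := rfl
  map_smul' _ _ := rfl

/-- Euclidean norm of a finitely supported vector. -/
def eunorm {ι : Type*} [Fintype ι] (v : ι → 𝕜) : ℝ :=
  Real.sqrt (∑ i, ‖v i‖ ^ 2)

/-- Euclidean norm of one block. -/
def bnorm (b : (k : Fin d) → Fin (n k) → 𝕜) : ℝ :=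
  Real.sqrt (∑ k, ∑ j, ‖b k j‖ ^ 2)

/-- Euclidean norm on `F^{r(Σ+d)}`. -/
def vnorm (p : Vecr 𝕜 d r n) : ℝ :=
  Real.sqrt (∑ i, ∑ k, ∑ j, ‖p i k j‖ ^ 2)

/-- Euclidean (Frobenius) norm on the tensor space. -/
def tnorm (A : Tensor 𝕜 d n) : ℝ :=
  Real.sqrt (∑ x, ‖A x‖ ^ 2)

/-- Scaling part of the group `𝒯`. -/
def IsScaling (s : Fin r → Fin d → 𝕜) : Prop :=
  (∀ i k, s i k ≠ 0) ∧ ∀ i, ∏ k, s i k = 1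

/-- Action of an element of `𝒯`. -/
def act (π : Equiv.Perm (Fin r)) (s : Fin r → Fin d → 𝕜) (q : Vecr 𝕜 d r n) :
    Vecr 𝕜 d r n :=
  fun i k j => s i k * q (π i) k j

/-- `p ∼ q`. -/
def rel (p q : Vecr 𝕜 d r n) : Prop :=
  ∃ (π : Equiv.Perm (Fin r)) (s : Fin r → Fin d → 𝕜), IsScaling s ∧ p = act π s q

/-- The distance measure `d(p,q) = inf_{T ∈ 𝒯} ‖p − Tq‖`. -/
def gdist (p q : Vecr 𝕜 d r n) : ℝ :=
  sInf { x | ∃ (π : Equiv.Perm (Fin r)) (s : Fin r → Fin d → 𝕜),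
    IsScaling s ∧ x = vnorm (p - act π s q) }

/-- Tensors of rank at most `r`. -/
def SecZ (𝕜 : Type*) [RCLike 𝕜] (d r : ℕ) (n : Fin d → ℕ) : Set (Tensor 𝕜 d n) :=
  Set.range (tmap (𝕜 := 𝕜) (d := d) (r := r) (n := n))

/-- `r`-identifiability. -/
def Identifiable {𝕜 : Type*} [RCLike 𝕜] {d : ℕ} {n : Fin d → ℕ} (r : ℕ)
    (A : Tensor 𝕜 d n) : Prop :=
  ∀ x y : Vecr 𝕜 d r n, tmap x = A → tmap y = A → rel x y

/-- `d(p, f†(A))`. -/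
def fdist (p : Vecr 𝕜 d r n) (A : Tensor 𝕜 d n) : ℝ :=
  sInf { x | ∃ q : Vecr 𝕜 d r n, tmap q = A ∧ x = gdist p q }

/-- Multiset of singular values of a matrix. -/
def singularValues {m l : Type*} [Fintype m] [Fintype l] [DecidableEq l]
    (M : Matrix m l 𝕜) : Multiset ℝ :=
  Multiset.map
    (fun i => Real.sqrt ((Matrix.isHermitian_conjTranspose_mul_self M).eigenvalues i))
    Finset.univ.val

/-- `j`-th largest singular value (1-indexed). -/
def nthSV {m l : Type*} [Fintype m] [Fintype l] [DecidableEq l]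
    (M : Matrix m l 𝕜) (j : ℕ) : ℝ :=
  (((singularValues M).sort (· ≤ ·)).reverse).getD (j - 1) 0

/-- Spectral norm. -/
def specNorm {m l : Type*} [Fintype m] [Fintype l] (M : Matrix m l 𝕜) : ℝ :=
  sSup { x | ∃ v : l → 𝕜, eunorm v = 1 ∧ x = eunorm (M.mulVec v) }

/-- Kernel vector `k_i^{(k)}` (one block). -/
def kvec [NeZero d] (p : Vecr 𝕜 d r n) (i : Fin r) (k : Fin d) :
    (l : Fin d) → Fin (n l) → 𝕜 :=
  fun l j =>
    if h0 : l = 0 then p i 0 (h0 ▸ j)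
    else if hk : l = k then -(p i k (hk ▸ j)) else 0

/-- Kernel basis vector `k_i^{(k)} ⊗ e_i` as a flattened column vector. -/
def kcol [NeZero d] (p : Vecr 𝕜 d r n) (i : Fin r) (k : Fin d) :
    ColIdx d r n → 𝕜 :=
  fun q => if q.1 = i then kvec p i k q.2.1 q.2.2 else 0

/-- `P ⊗ I_{Σ+d}` for a permutation `π`. -/
def permMx (𝕜 : Type*) [RCLike 𝕜] (d r : ℕ) (n : Fin d → ℕ)
    (π : Equiv.Perm (Fin r)) : Matrix (ColIdx d r n) (ColIdx d r n) 𝕜 :=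
  Matrix.of fun x y => if y.1 = π x.1 ∧ x.2 = y.2 then 1 else 0

/-- Block diagonal scaling matrix `diag(D_1, …, D_r)`. -/
def scalMx (s : Fin r → Fin d → 𝕜) : Matrix (ColIdx d r n) (ColIdx d r n) 𝕜 :=
  Matrix.diagonal fun x => s x.1 x.2.1

/-- The set `𝒯 = 𝒫ℬ` of matrices. -/
def Tset (𝕜 : Type*) [RCLike 𝕜] (d r : ℕ) (n : Fin d → ℕ) :
    Set (Matrix (ColIdx d r n) (ColIdx d r n) 𝕜) :=
  { M | ∃ (π : Equiv.Perm (Fin r)) (s : Fin r → Fin d → 𝕜),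
      IsScaling s ∧ M = permMx 𝕜 d r n π * scalMx s }

/-- The `i`-th block `T_i` of Terracini's matrix. -/
def terraciniBlock (p : Vecr 𝕜 d r n) (i : Fin r) :
    Matrix ((k : Fin d) → Fin (n k)) (Σ k : Fin d, Fin (n k)) 𝕜 :=
  Matrix.of fun x q =>
    (if x q.1 = q.2 then (1 : 𝕜) else 0) * ∏ l ∈ Finset.univ.erase q.1, p i l (x l)

/-- Kernel-basis matrix `K = [k^{(2)} ⋯ k^{(d)}]` (single point, r = 1). -/
def Kmx [NeZero d] (a : (k : Fin d) → Fin (n k) → 𝕜) :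
    Matrix (Σ k : Fin d, Fin (n k)) {k : Fin d // k ≠ 0} 𝕜 :=
  Matrix.of fun q j => kvec (fun _ : Fin 1 => a) 0 j.1 q.1 q.2

theorem sum_ite_mul_prod_erase_mul {ι R : Type*} [Fintype ι] [DecidableEq ι] [CommSemiring R]
    {m : ι → Type*} [∀ k, Fintype (m k)] [∀ k, DecidableEq (m k)]
    (v : (k : ι) → m k → R) (x : (k : ι) → m k) (k : ι) :
    ∑ j, (if x k = j then (1 : R) else 0) * (∏ l ∈ Finset.univ.erase k, v l (x l)) * v k j
      = ∏ l, v l (x l) := by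
  rw [Finset.sum_eq_single_of_mem (x k) (Finset.mem_univ _) fun j _ hj => by simp [Ne.symm hj],
    if_pos rfl, one_mul, Finset.prod_erase_mul _ _ (Finset.mem_univ k)]

/-- Euler's identity for the multihomogeneous map `f`: each of the `d` factor blocks of
`T_p p` reproduces `f(p)`. -/
theorem terracini_mulVec_flat (p : Vecr 𝕜 d r n) :
    (terracini p).mulVec (flat p) = fun x => (d : 𝕜) * tmap p x := by
  funext x
  simp only [Matrix.mulVec, dotProduct, terracini, flat, tmap, Matrix.of_apply,
    Fintype.sum_prod_type, Finset.mul_sum]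
  refine Finset.sum_congr rfl fun i _ => ?_
  rw [← Finset.univ_sigma_univ, Finset.sum_sigma]
  simp only [sum_ite_mul_prod_erase_mul (p i) x, Finset.sum_const, Finset.card_univ,
    Fintype.card_fin, nsmul_eq_mul]

theorem sum_conj_mul_self_eq_eunorm_sq {ι : Type*} [Fintype ι] (v : ι → 𝕜) :
    ∑ j, (starRingEnd 𝕜) (v j) * v j = ((eunorm v ^ 2 : ℝ) : 𝕜) := by
  rw [eunorm, Real.sq_sqrt (Finset.sum_nonneg fun _ _ => sq_nonneg _)]
  push_cast
  exact Finset.sum_congr rfl fun j _ => RCLike.conj_mul (v j)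

section Kernel

variable [NeZero d] (p : Vecr 𝕜 d r n) (i : Fin r) {k : Fin d}

theorem kvec_zero (j : Fin (n 0)) : kvec p i k 0 j = p i 0 j := by
  simp [kvec]

theorem kvec_self (hk : k ≠ 0) (j : Fin (n k)) : kvec p i k k j = -p i k j := by
  simp [kvec, hk]

theorem kvec_of_ne {l : Fin d} (h0 : l ≠ 0) (hk : l ≠ k) (j : Fin (n l)) :
    kvec p i k l j = 0 := by
  simp [kvec, h0, hk]

theorem sum_conj_kcol_mul_flat (hk : k ≠ 0) :
    ∑ q, (starRingEnd 𝕜) (kcol p i k q) * flat p q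
      = ((eunorm (p i 0) ^ 2 : ℝ) : 𝕜) - ((eunorm (p i k) ^ 2 : ℝ) : 𝕜) := by
  rw [Fintype.sum_prod_type,
    Fintype.sum_eq_single i fun i' hi' => Finset.sum_eq_zero fun _ _ => by simp [kcol, hi']]
  simp only [kcol, flat, if_true]
  rw [← Finset.univ_sigma_univ, Finset.sum_sigma,
    Finset.sum_eq_add (0 : Fin d) k (Ne.symm hk)
      (fun l _ hl => by simp [kvec_of_ne p i hl.1 hl.2]) (by simp) (by simp)]
  simp only [kvec_zero, kvec_self p i hk, map_neg, neg_mul, Finset.sum_neg_distrib,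
    sum_conj_mul_self_eq_eunorm_sq, sub_eq_add_neg]

end Kernel

theorem euler_identity_and_kernel_orthogonality_general [NeZero d]
    (p : Vecr 𝕜 d r n) :
    ((terracini p).mulVec (flat p) = fun x => (d : 𝕜) * tmap p x)
    ∧ ((∀ (i : Fin r) (k k' : Fin d), eunorm (p i k) = eunorm (p i k')) →
        ∀ (i : Fin r) (k : Fin d), k ≠ 0 →
          ∑ q : ColIdx d r n, (starRingEnd 𝕜) (kcol p i k q) * flat p q = 0) :=
  ⟨terracini_mulVec_flat p, fun hbal i k hk => by
    rw [sum_conj_kcol_mul_flat p i hk, hbal i 0 k, sub_self]⟩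

/-- the Euler-type identity `T_p p = d·f(p)` holds for every `p`, and a
norm-balanced `p` is orthogonal to every kernel basis vector `k_i^{(k)} ⊗ e_i`,
i.e. `Kᴴ p = 0`. -/
theorem euler_identity_and_kernel_orthogonality [NeZero d]
    (hd : 2 ≤ d) (hn : ∀ k, 2 ≤ n k) (hr : 1 ≤ r)
    (p : Vecr 𝕜 d r n) :
    ((terracini p).mulVec (flat p) = fun x => (d : 𝕜) * tmap p x)
    ∧ ((∀ (i : Fin r) (k k' : Fin d), eunorm (p i k) = eunorm (p i k')) →
        ∀ (i : Fin r) (k : Fin d), k ≠ 0 →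
          ∑ q : ColIdx d r n, (starRingEnd 𝕜) (kcol p i k q) * flat p q = 0) :=
  euler_identity_and_kernel_orthogonality_general p

end TensorCond
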